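/- There exists a constant C > 0, depending only on n, δ, g, γ_D and the constants C_β, such that for every v = r v̂ with r = |v| ≥ 1, every t ∈ ℝ with |t| ≥ 1, and every ν ∈ [0,1]: ∫_{1}^{|t|} s²·‖ΔṼ^l_{|v|,s}‖_∞ ds ≤ C |v|^{−(γ_D+1)ν} |t|^{3−(γ_D+1)(2−ν)}. -/

import Mathlib

open scoped InnerProductSpace
open MeasureTheory Real Filter

noncomputable section

/-- sup-norm of the gradient of `W` : `‖∇W‖_∞ = sup_x |∇W(x)|`. -/
noncomputable def gradSup {n : ℕ} (W : EuclideanSpace ℝ (Fin n) → ℝ) : ℝ :=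
  ⨆ x, ‖fderiv ℝ W x‖

/-- sup-norm of the Laplacian of `W` : `‖ΔW‖_∞ = sup_x |ΔW(x)|`. -/
noncomputable def lapSup {n : ℕ} (W : EuclideanSpace ℝ (Fin n) → ℝ) : ℝ :=
  ⨆ x, |∑ j, fderiv ℝ (fun y => fderiv ℝ W y (EuclideanSpace.single j 1)) x
      (EuclideanSpace.single j 1)|

/-- the cut-off translated potential
`Ṽ_{|v|,t}(x) = V(x + v t + e₁ t²/2) · g(x/(λ₁|v|⟨t⟩))`, with `v = r·v̂`. -/
noncomputable def cutV {n : ℕ} (V g : EuclideanSpace ℝ (Fin n) → ℝ)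
    (lam : ℝ) (vhat e1 : EuclideanSpace ℝ (Fin n)) (r t : ℝ) :
    EuclideanSpace ℝ (Fin n) → ℝ :=
  fun x => V (x + (r * t) • vhat + (t ^ 2 / 2) • e1) *
    g ((lam * r * Real.sqrt (1 + t ^ 2))⁻¹ • x)

section S11Aux
variable {n : ℕ}




lemma s11_fderiv_zero_far (g : EuclideanSpace ℝ (Fin n) → ℝ)
    (hg4 : ∀ y, 4 ≤ ‖y‖ → g y = 0) {y : EuclideanSpace ℝ (Fin n)} (hy : 4 < ‖y‖) :
    fderiv ℝ g y = 0 := by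
  have hopen : IsOpen {z : EuclideanSpace ℝ (Fin n) | 4 < ‖z‖} :=
    isOpen_lt continuous_const continuous_norm
  have hev : g =ᶠ[nhds y] (fun _ => (0:ℝ)) :=
    Filter.eventuallyEq_of_mem (hopen.mem_nhds hy) (fun z hz => hg4 z (le_of_lt hz))
  rw [hev.fderiv_eq, fderiv_fun_const]
  rfl

lemma s11_fderiv2_zero_far (g : EuclideanSpace ℝ (Fin n) → ℝ)
    (hg4 : ∀ y, 4 ≤ ‖y‖ → g y = 0) (v : EuclideanSpace ℝ (Fin n))
    {y : EuclideanSpace ℝ (Fin n)} (hy : 4 < ‖y‖) :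
    fderiv ℝ (fun z => fderiv ℝ g z v) y = 0 := by
  have hopen : IsOpen {z : EuclideanSpace ℝ (Fin n) | 4 < ‖z‖} :=
    isOpen_lt continuous_const continuous_norm
  have hev : (fun z => fderiv ℝ g z v) =ᶠ[nhds y] (fun _ => (0:ℝ)) :=
    Filter.eventuallyEq_of_mem (hopen.mem_nhds hy)
      (fun z hz => by rw [s11_fderiv_zero_far g hg4 hz]; rfl)
  rw [hev.fderiv_eq, fderiv_fun_const]
  rfl

lemma s11_exists_bound {F : Type*} [NormedAddCommGroup F] (f : EuclideanSpace ℝ (Fin n) → F)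
    (hf : Continuous f) (h0 : ∀ y, 4 < ‖y‖ → f y = 0) :
    ∃ M, 0 ≤ M ∧ ∀ y, ‖f y‖ ≤ M := by
  obtain ⟨M, hM⟩ := (isCompact_closedBall (0 : EuclideanSpace ℝ (Fin n)) 4).exists_bound_of_continuousOn hf.continuousOn
  refine ⟨max M 0, le_max_right _ _, fun y => ?_⟩
  by_cases hy : ‖y‖ ≤ 4
  · exact le_trans (hM y (by simpa [Metric.mem_closedBall, dist_zero_right] using hy)) (le_max_left _ _)
  · rw [h0 y (lt_of_not_ge hy)]; simp



lemma s11_hasFDerivAt_shift (V : EuclideanSpace ℝ (Fin n) → ℝ)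
    (hV : Differentiable ℝ V) (c x : EuclideanSpace ℝ (Fin n)) :
    HasFDerivAt (fun z => V (z + c)) (fderiv ℝ V (x + c)) x := by
  have h1 : HasFDerivAt (fun z : EuclideanSpace ℝ (Fin n) => z + c)
      (ContinuousLinearMap.id ℝ _) x := (hasFDerivAt_id x).add_const c
  have := (hV (x + c)).hasFDerivAt.comp x h1
  rwa [ContinuousLinearMap.comp_id] at this

lemma s11_hasFDerivAt_scale (g : EuclideanSpace ℝ (Fin n) → ℝ)
    (hg : Differentiable ℝ g) (b : ℝ) (x : EuclideanSpace ℝ (Fin n)) :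
    HasFDerivAt (fun z => g (b • z)) (b • fderiv ℝ g (b • x)) x := by
  have h1 : HasFDerivAt (fun z : EuclideanSpace ℝ (Fin n) => b • z)
      (b • ContinuousLinearMap.id ℝ _) x := (hasFDerivAt_id x).const_smul b
  have := (hg (b • x)).hasFDerivAt.comp x h1
  refine this.congr_fderiv ?_
  ext z
  simp

lemma s11_diff_fderiv_apply (V : EuclideanSpace ℝ (Fin n) → ℝ) (hV : ContDiff ℝ 2 V)
    (v : EuclideanSpace ℝ (Fin n)) :
    Differentiable ℝ (fun z => fderiv ℝ V z v) := by
  have h1 : ContDiff ℝ 1 (fun z => fderiv ℝ V z) := hV.fderiv_right (by norm_num)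
  exact ((ContinuousLinearMap.apply ℝ ℝ v).differentiable.comp (h1.differentiable one_ne_zero))

lemma s11_first_deriv_formula (V g : EuclideanSpace ℝ (Fin n) → ℝ)
    (hV : ContDiff ℝ 2 V) (hg : ContDiff ℝ (⊤ : ℕ∞) g)
    (c : EuclideanSpace ℝ (Fin n)) (b : ℝ) (v : EuclideanSpace ℝ (Fin n))
    (y : EuclideanSpace ℝ (Fin n)) :
    fderiv ℝ (fun z => V (z + c) * g (b • z)) y v
      = fderiv ℝ V (y + c) v * g (b • y) + V (y + c) * (b * fderiv ℝ g (b • y) v) := by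
  have h1 := s11_hasFDerivAt_shift V (hV.differentiable two_ne_zero) c y
  have h2 := s11_hasFDerivAt_scale g (hg.differentiable (by simp)) b y
  rw [(h1.fun_mul h2).fderiv]
  simp [smul_eq_mul]
  ring

lemma s11_second_deriv_formula (V g : EuclideanSpace ℝ (Fin n) → ℝ)
    (hV : ContDiff ℝ 2 V) (hg : ContDiff ℝ (⊤ : ℕ∞) g)
    (c : EuclideanSpace ℝ (Fin n)) (b : ℝ) (v : EuclideanSpace ℝ (Fin n))
    (x : EuclideanSpace ℝ (Fin n)) :
    fderiv ℝ (fun y => fderiv ℝ (fun z => V (z + c) * g (b • z)) y v) x v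
      = fderiv ℝ (fun z => fderiv ℝ V z v) (x + c) v * g (b • x)
        + fderiv ℝ V (x + c) v * (b * fderiv ℝ g (b • x) v)
        + (fderiv ℝ V (x + c) v * (b * fderiv ℝ g (b • x) v)
        + V (x + c) * (b * (b * fderiv ℝ (fun z => fderiv ℝ g z v) (b • x) v))) := by
  have hfun : (fun y => fderiv ℝ (fun z => V (z + c) * g (b • z)) y v)
      = fun y => fderiv ℝ V (y + c) v * g (b • y) + V (y + c) * (b * fderiv ℝ g (b • y) v) :=
    funext (s11_first_deriv_formula V g hV hg c b v)
  rw [hfun]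
  -- pieces
  have t1 : HasFDerivAt (fun y : EuclideanSpace ℝ (Fin n) => fderiv ℝ V (y + c) v)
      (fderiv ℝ (fun z => fderiv ℝ V z v) (x + c)) x :=
    s11_hasFDerivAt_shift _ (s11_diff_fderiv_apply V hV v) c x
  have t2 : HasFDerivAt (fun y : EuclideanSpace ℝ (Fin n) => g (b • y))
      (b • fderiv ℝ g (b • x)) x := s11_hasFDerivAt_scale g (hg.differentiable (by simp)) b x
  have t3 : HasFDerivAt (fun y : EuclideanSpace ℝ (Fin n) => V (y + c))
      (fderiv ℝ V (x + c)) x := s11_hasFDerivAt_shift V (hV.differentiable two_ne_zero) c x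
  have hdg : Differentiable ℝ (fun z => fderiv ℝ g z v) := by
    have h1 : ContDiff ℝ 1 (fun z => fderiv ℝ g z) := hg.fderiv_right (by exact WithTop.coe_le_coe.mpr le_top)
    exact ((ContinuousLinearMap.apply ℝ ℝ v).differentiable.comp (h1.differentiable one_ne_zero))
  have t4' : HasFDerivAt (fun y : EuclideanSpace ℝ (Fin n) => fderiv ℝ g (b • y) v)
      (b • fderiv ℝ (fun z => fderiv ℝ g z v) (b • x)) x :=
    s11_hasFDerivAt_scale _ hdg b x
  have t4 : HasFDerivAt (fun y : EuclideanSpace ℝ (Fin n) => b * fderiv ℝ g (b • y) v)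
      (b • (b • fderiv ℝ (fun z => fderiv ℝ g z v) (b • x))) x := t4'.const_mul b
  rw [((t1.fun_mul t2).fun_add (t3.fun_mul t4)).fderiv]
  simp [smul_eq_mul]
  ring



set_option maxHeartbeats 1000000 in
lemma s11_geom (vhat e1 : EuclideanSpace ℝ (Fin n)) (hvhat : ‖vhat‖ = 1) (he1 : ‖e1‖ = 1)
    (δ : ℝ) (hδ : δ = |⟪vhat, e1⟫_ℝ|) (hδ1 : δ < 1)
    (r s : ℝ) (hr : 1 ≤ r) (hs : 1 ≤ s) (x : EuclideanSpace ℝ (Fin n))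
    (hx : ‖x‖ ≤ 4 * ((1 - δ) / (16 * Real.sqrt 2)) * r * Real.sqrt (1 + s ^ 2)) :
    3 * Real.sqrt (1 - δ) / 8 * (r * s) ≤ ‖x + ((r * s) • vhat + (s ^ 2 / 2) • e1)‖ ∧
    3 * Real.sqrt (1 - δ) / 8 * s ^ 2 ≤ ‖x + ((r * s) • vhat + (s ^ 2 / 2) • e1)‖ := by
  have hδ0 : 0 ≤ δ := hδ ▸ abs_nonneg _
  set A := r * s with hA
  set B := s ^ 2 / 2 with hB
  have hA1 : 1 ≤ A := one_le_mul_of_one_le_of_one_le hr hs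
  have hB0 : 0 < B := by nlinarith
  set c := A • vhat + B • e1 with hc
  have hip : -δ ≤ ⟪vhat, e1⟫_ℝ := by rw [hδ]; exact neg_abs_le _
  have hnc2 : ‖c‖ ^ 2 = A ^ 2 + 2 * (A * B * ⟪vhat, e1⟫_ℝ) + B ^ 2 := by
    rw [hc, @norm_add_sq_real, real_inner_smul_left, real_inner_smul_right,
      norm_smul, norm_smul, hvhat, he1]
    simp [abs_of_pos (lt_of_lt_of_le one_pos hA1), abs_of_pos hB0]
    ring
  set Q := Real.sqrt (A ^ 2 + B ^ 2) with hQ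
  have hQ0 : 0 ≤ Q := Real.sqrt_nonneg _
  have hQ2 : Q ^ 2 = A ^ 2 + B ^ 2 := Real.sq_sqrt (by positivity)
  have hAQ : A ≤ Q := by
    rw [hQ]
    have : A = Real.sqrt (A ^ 2) := (Real.sqrt_sq (by linarith)).symm
    rw [this]
    exact Real.sqrt_le_sqrt (by nlinarith)
  have hBQ : B ≤ Q := by
    rw [hQ]
    have : B = Real.sqrt (B ^ 2) := (Real.sqrt_sq hB0.le).symm
    rw [this]
    exact Real.sqrt_le_sqrt (by nlinarith)
  have hd0 : 0 < 1 - δ := by linarith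
  have hsd : Real.sqrt (1 - δ) * Real.sqrt (1 - δ) = 1 - δ := Real.mul_self_sqrt hd0.le
  have hsd1 : Real.sqrt (1 - δ) ≤ 1 := Real.sqrt_le_one.mpr (by linarith)
  have hsd0 : 0 < Real.sqrt (1 - δ) := Real.sqrt_pos.mpr hd0
  have hcQ : Real.sqrt (1 - δ) * Q ≤ ‖c‖ := by
    have h1 : (Real.sqrt (1 - δ) * Q) ^ 2 ≤ ‖c‖ ^ 2 := by
      have hsd' : Real.sqrt (1 - δ) ^ 2 = 1 - δ := Real.sq_sqrt hd0.le
      rw [hnc2, mul_pow, hQ2, hsd']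
      have hAB : 0 ≤ A * B := by positivity
      nlinarith [mul_nonneg hδ0 (sq_nonneg (A - B)), mul_nonneg hAB (by linarith : 0 ≤ ⟪vhat, e1⟫_ℝ + δ)]
    calc Real.sqrt (1 - δ) * Q = Real.sqrt ((Real.sqrt (1 - δ) * Q) ^ 2) :=
          (Real.sqrt_sq (by positivity)).symm
      _ ≤ Real.sqrt (‖c‖ ^ 2) := Real.sqrt_le_sqrt h1
      _ = ‖c‖ := Real.sqrt_sq (norm_nonneg _)
  -- bound on ‖x‖
  have h2 : Real.sqrt 2 * Real.sqrt 2 = 2 := Real.mul_self_sqrt (by norm_num)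
  have h2pos : 0 < Real.sqrt 2 := Real.sqrt_pos.mpr (by norm_num)
  have hs2 : Real.sqrt (1 + s ^ 2) ≤ Real.sqrt 2 * s := by
    have hss : (1:ℝ) + s ^ 2 ≤ 2 * s ^ 2 := by nlinarith
    calc Real.sqrt (1 + s ^ 2) ≤ Real.sqrt (2 * s ^ 2) := Real.sqrt_le_sqrt hss
      _ = Real.sqrt 2 * Real.sqrt (s ^ 2) := Real.sqrt_mul (by norm_num) _
      _ = Real.sqrt 2 * s := by rw [Real.sqrt_sq (by linarith)]
  have hxA : ‖x‖ ≤ (1 - δ) / 4 * A := by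
    have hr0 : 0 < r := lt_of_lt_of_le one_pos hr
    have h3 : 4 * ((1 - δ) / (16 * Real.sqrt 2)) * r * Real.sqrt (1 + s ^ 2)
        ≤ 4 * ((1 - δ) / (16 * Real.sqrt 2)) * r * (Real.sqrt 2 * s) := by
      have hpos : 0 ≤ 4 * ((1 - δ) / (16 * Real.sqrt 2)) * r := by positivity
      exact mul_le_mul_of_nonneg_left hs2 hpos
    have e : (16 * Real.sqrt 2) * ((1 - δ) / (16 * Real.sqrt 2)) = 1 - δ :=
      mul_div_cancel₀ _ (by positivity)
    have h4 : 4 * ((1 - δ) / (16 * Real.sqrt 2)) * r * (Real.sqrt 2 * s) = (1 - δ) / 4 * A := by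
      rw [hA]
      linear_combination (r * s / 4) * e
    linarith [hx.trans h3]
  have hxQ : ‖x‖ ≤ Real.sqrt (1 - δ) / 4 * Q := by
    have h5 : (1 - δ) / 4 * A ≤ Real.sqrt (1 - δ) / 4 * Q := by
      have h6 : 1 - δ ≤ Real.sqrt (1 - δ) := by nlinarith
      have hA0 : 0 ≤ A := by linarith
      nlinarith
    linarith
  have hkey : 3 / 4 * (Real.sqrt (1 - δ) * Q) ≤ ‖x + c‖ := by
    have h7 : ‖c‖ ≤ ‖x + c‖ + ‖x‖ := by
      have := norm_sub_le (x + c) x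
      simpa using this
    linarith
  have hmA := mul_le_mul_of_nonneg_left hAQ hsd0.le
  have hmB := mul_le_mul_of_nonneg_left hBQ hsd0.le
  have hQnn : 0 ≤ Real.sqrt (1 - δ) * Q := by positivity
  constructor
  · have : 3 * Real.sqrt (1 - δ) / 8 * A ≤ 3 / 4 * (Real.sqrt (1 - δ) * Q) := by linarith
    linarith
  · have hBs : s ^ 2 = 2 * B := by rw [hB]; ring
    have : 3 * Real.sqrt (1 - δ) / 8 * s ^ 2 ≤ 3 / 4 * (Real.sqrt (1 - δ) * Q) := by
      rw [hBs]; linarith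
    linarith



lemma s11_interp {N c1 A B ν p : ℝ} (hc1 : 0 < c1) (hA : 0 < A) (hB : 0 < B)
    (h1 : c1 * A ≤ N) (h2 : c1 * B ≤ N) (hν : 0 ≤ ν) (hν1 : ν ≤ 1) (hp : 0 ≤ p) :
    N ^ (-p) ≤ c1 ^ (-p) * (A ^ ν * B ^ (1 - ν)) ^ (-p) := by
  have hN : 0 < N := lt_of_lt_of_le (by positivity) h1
  have hc : c1 ^ ν * c1 ^ (1 - ν) = c1 := by
    rw [← Real.rpow_add hc1, show ν + (1 - ν) = 1 by ring, Real.rpow_one]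
  have hNN : N ^ ν * N ^ (1 - ν) = N := by
    rw [← Real.rpow_add hN, show ν + (1 - ν) = 1 by ring, Real.rpow_one]
  have hkey : c1 * (A ^ ν * B ^ (1 - ν)) ≤ N := by
    have e1 : (c1 * A) ^ ν * (c1 * B) ^ (1 - ν) ≤ N ^ ν * N ^ (1 - ν) :=
      mul_le_mul (Real.rpow_le_rpow (by positivity) h1 hν)
        (Real.rpow_le_rpow (by positivity) h2 (by linarith)) (by positivity) (by positivity)
    calc c1 * (A ^ ν * B ^ (1 - ν)) = (c1 ^ ν * c1 ^ (1 - ν)) * (A ^ ν * B ^ (1 - ν)) := by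
          rw [hc]
      _ = (c1 * A) ^ ν * (c1 * B) ^ (1 - ν) := by
          rw [Real.mul_rpow hc1.le hA.le, Real.mul_rpow hc1.le hB.le]; ring
      _ ≤ N ^ ν * N ^ (1 - ν) := e1
      _ = N := hNN
  calc N ^ (-p) ≤ (c1 * (A ^ ν * B ^ (1 - ν))) ^ (-p) :=
        Real.rpow_le_rpow_of_nonpos (by positivity) hkey (by linarith)
    _ = c1 ^ (-p) * (A ^ ν * B ^ (1 - ν)) ^ (-p) :=
        Real.mul_rpow hc1.le (by positivity)

lemma s11_P_eq (r s ν : ℝ) (hr : 0 < r) (hs : 0 < s) :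
    (r * s) ^ ν * ((s ^ 2 : ℝ)) ^ (1 - ν) = r ^ ν * s ^ (2 - ν) := by
  rw [Real.mul_rpow hr.le hs.le, ← Real.rpow_natCast s 2, ← Real.rpow_mul hs.le]
  rw [mul_assoc, ← Real.rpow_add hs, show ν + ((2:ℕ):ℝ) * (1 - ν) = 2 - ν by push_cast; ring]


lemma s11_fderiv_clm_apply_eq (g : EuclideanSpace ℝ (Fin n) → ℝ) (hg : ContDiff ℝ (⊤ : ℕ∞) g)
    (v y : EuclideanSpace ℝ (Fin n)) :
    fderiv ℝ (fun z => fderiv ℝ g z v) y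
      = (ContinuousLinearMap.apply ℝ ℝ v).comp (fderiv ℝ (fderiv ℝ g) y) := by
  have h1 : HasFDerivAt (fderiv ℝ g) (fderiv ℝ (fderiv ℝ g) y) y :=
    (((hg.fderiv_right (m := 1) (by exact WithTop.coe_le_coe.mpr le_top)).differentiable one_ne_zero) y).hasFDerivAt
  exact ((ContinuousLinearMap.apply ℝ ℝ v).hasFDerivAt.comp y h1).fderiv

set_option maxHeartbeats 2000000 in
lemma s11_main_bound
    (vhat e1 : EuclideanSpace ℝ (Fin n)) (hvhat : ‖vhat‖ = 1) (he1n : ‖e1‖ = 1)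
    (δ : ℝ) (hδ : δ = |⟪vhat, e1⟫_ℝ|) (hδ1 : δ < 1)
    (lam : ℝ) (hlam : lam = (1 - δ) / (16 * Real.sqrt 2))
    (g : EuclideanSpace ℝ (Fin n) → ℝ) (hg : ContDiff ℝ (⊤ : ℕ∞) g)
    (hg0 : ∀ y, 0 ≤ g y) (hg1 : ∀ y, g y ≤ 1) (hg4 : ∀ y, 4 ≤ ‖y‖ → g y = 0)
    (Vl : EuclideanSpace ℝ (Fin n) → ℝ) (hVl : ContDiff ℝ 2 Vl)
    (C0 C1 C2 γD : ℝ) (hC0 : 0 < C0) (hC1 : 0 < C1) (hC2 : 0 < C2) (hγD0 : 0 < γD)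
    (hVb : ∀ x, |Vl x| ≤ C0 * Real.sqrt (1 + ‖x‖ ^ 2) ^ (-γD))
    (hVd1 : ∀ x, ∀ j : Fin n,
      |fderiv ℝ Vl x (EuclideanSpace.single j 1)| ≤
        C1 * Real.sqrt (1 + ‖x‖ ^ 2) ^ (-γD - 1 / 2))
    (hVd2 : ∀ x, ∀ j k : Fin n,
      |fderiv ℝ (fun y => fderiv ℝ Vl y (EuclideanSpace.single k 1)) x
          (EuclideanSpace.single j 1)| ≤
        C2 * Real.sqrt (1 + ‖x‖ ^ 2) ^ (-γD - 1))
    (M1 M2 : ℝ) (hM1n : 0 ≤ M1) (hM2n : 0 ≤ M2)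
    (hM1 : ∀ y, ‖fderiv ℝ g y‖ ≤ M1) (hM2 : ∀ y, ‖fderiv ℝ (fderiv ℝ g) y‖ ≤ M2)
    (r s ν : ℝ) (hr : 1 ≤ r) (hs : 1 ≤ s) (hν0 : 0 ≤ ν) (hν1 : ν ≤ 1) :
    lapSup (cutV Vl g lam vhat e1 r s) ≤
      (n * (C2 * (3 * Real.sqrt (1 - δ) / 8) ^ (-γD - 1)
        + 2 * (C1 * M1 * lam⁻¹ * (3 * Real.sqrt (1 - δ) / 8) ^ (-γD - 1 / 2))
        + C0 * M2 * lam⁻¹ * lam⁻¹ * (3 * Real.sqrt (1 - δ) / 8) ^ (-γD)))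
       * (r ^ (ν * (-γD - 1)) * s ^ ((2 - ν) * (-γD - 1))) := by
  have hδ0 : 0 ≤ δ := hδ ▸ abs_nonneg _
  have hd0 : (0:ℝ) < 1 - δ := by linarith
  set c1 : ℝ := 3 * Real.sqrt (1 - δ) / 8 with hc1def
  have hc1 : 0 < c1 := by rw [hc1def]; positivity
  have hlam0 : 0 < lam := by rw [hlam]; positivity
  set K0 : ℝ := C2 * c1 ^ (-γD - 1) + 2 * (C1 * M1 * lam⁻¹ * c1 ^ (-γD - 1 / 2))
      + C0 * M2 * lam⁻¹ * lam⁻¹ * c1 ^ (-γD) with hK0def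
  have hK0 : 0 ≤ K0 := by
    have h1 : 0 < C2 * c1 ^ (-γD - 1) := by positivity
    have h2 : 0 ≤ 2 * (C1 * M1 * lam⁻¹ * c1 ^ (-γD - 1 / 2)) := by positivity
    have h3 : 0 ≤ C0 * M2 * lam⁻¹ * lam⁻¹ * c1 ^ (-γD) := by positivity
    rw [hK0def]; linarith
  have hr0 : (0:ℝ) < r := lt_of_lt_of_le one_pos hr
  have hs0 : (0:ℝ) < s := lt_of_lt_of_le one_pos hs
  set c : EuclideanSpace ℝ (Fin n) := (r * s) • vhat + (s ^ 2 / 2) • e1 with hcdef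
  set b : ℝ := (lam * r * Real.sqrt (1 + s ^ 2))⁻¹ with hbdef
  have hsq1 : (1:ℝ) ≤ Real.sqrt (1 + s ^ 2) := by
    have h := Real.sqrt_le_sqrt (show (1:ℝ) ≤ 1 + s ^ 2 by nlinarith)
    rwa [Real.sqrt_one] at h
  have hsq0 : (0:ℝ) < Real.sqrt (1 + s ^ 2) := lt_of_lt_of_le one_pos hsq1
  have hb0 : 0 < b := by rw [hbdef]; positivity
  set P : ℝ := r ^ ν * s ^ (2 - ν) with hPdef
  have hP0 : 0 < P := by rw [hPdef]; positivity
  have hPeq : (r * s) ^ ν * ((s ^ 2 : ℝ)) ^ (1 - ν) = P := by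
    rw [hPdef]; exact s11_P_eq r s ν hr0 hs0
  -- bound on b
  have hbP : b ≤ lam⁻¹ * P ^ (-(1/2) : ℝ) := by
    set u : ℝ := r * Real.sqrt (1 + s ^ 2) with hudef
    have hu1 : 1 ≤ u := one_le_mul_of_one_le_of_one_le hr hsq1
    have hu0 : 0 < u := lt_of_lt_of_le one_pos hu1
    have hsu : s ≤ u := by
      have h1 : s ≤ Real.sqrt (1 + s ^ 2) := by
        have h := Real.sqrt_le_sqrt (show s ^ 2 ≤ 1 + s ^ 2 by nlinarith)
        rwa [Real.sqrt_sq hs0.le] at h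
      nlinarith [Real.sqrt_nonneg (1 + s ^ 2)]
    have hrs : r * s ≤ u ^ 2 := by
      have : r * s ≤ u := by
        rw [hudef]
        have h1 : s ≤ Real.sqrt (1 + s ^ 2) := by
          have h := Real.sqrt_le_sqrt (show s ^ 2 ≤ 1 + s ^ 2 by nlinarith)
          rwa [Real.sqrt_sq hs0.le] at h
        nlinarith
      nlinarith
    have hs2u : s ^ 2 ≤ u ^ 2 := by nlinarith
    have hPu : P ≤ u ^ 2 := by
      rw [← hPeq]
      have e2 : ((u:ℝ) ^ 2) ^ ν * ((u:ℝ) ^ 2) ^ (1 - ν) = u ^ 2 := by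
        rw [← Real.rpow_add (by positivity), show ν + (1 - ν) = 1 by ring, Real.rpow_one]
      calc (r * s) ^ ν * ((s ^ 2 : ℝ)) ^ (1 - ν)
          ≤ ((u:ℝ) ^ 2) ^ ν * ((u:ℝ) ^ 2) ^ (1 - ν) :=
            mul_le_mul (Real.rpow_le_rpow (by positivity) hrs hν0)
              (Real.rpow_le_rpow (by positivity) hs2u (by linarith)) (by positivity) (by positivity)
        _ = u ^ 2 := e2
    have hPhalf : P ^ ((1:ℝ)/2) ≤ u := by
      have h1 : P ^ ((1:ℝ)/2) ≤ ((u:ℝ) ^ 2) ^ ((1:ℝ)/2) := Real.rpow_le_rpow hP0.le hPu (by norm_num)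
      have h2 : ((u:ℝ) ^ 2) ^ ((1:ℝ)/2) = u := by
        rw [← Real.rpow_natCast u 2, ← Real.rpow_mul hu0.le]
        norm_num
      linarith
    have hmain : (lam * u)⁻¹ ≤ (lam * P ^ ((1:ℝ)/2))⁻¹ := by
      apply inv_anti₀ (by positivity)
      exact mul_le_mul_of_nonneg_left hPhalf hlam0.le
    calc b = (lam * u)⁻¹ := by rw [hbdef, hudef, mul_assoc]
      _ ≤ (lam * P ^ ((1:ℝ)/2))⁻¹ := hmain
      _ = lam⁻¹ * P ^ (-(1/2) : ℝ) := by
          rw [mul_inv, Real.rpow_neg hP0.le]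
  -- rewrite cutV
  have hW : cutV Vl g lam vhat e1 r s = fun z => Vl (z + c) * g (b • z) := by
    funext z
    simp only [cutV, hcdef, hbdef, add_assoc]
  have hPfin : P ^ (-γD - 1) = r ^ (ν * (-γD - 1)) * s ^ ((2 - ν) * (-γD - 1)) := by
    rw [hPdef, Real.mul_rpow (by positivity) (by positivity),
      Real.rpow_mul hr0.le, Real.rpow_mul hs0.le]
  rw [hW]
  unfold lapSup
  rw [← hPfin, show (↑n * K0) * P ^ (-γD - 1) = ↑n * (K0 * P ^ (-γD - 1)) from mul_assoc _ _ _]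
  apply Real.iSup_le _ (by positivity)
  intro x
  -- entrywise bound
  have hentry : ∀ j : Fin n,
      |fderiv ℝ (fun y => fderiv ℝ (fun z => Vl (z + c) * g (b • z)) y
          (EuclideanSpace.single j 1)) x (EuclideanSpace.single j 1)| ≤ K0 * P ^ (-γD - 1) := by
    intro j
    set uj : EuclideanSpace ℝ (Fin n) := EuclideanSpace.single j 1 with hujdef
    have hujn : ‖uj‖ = 1 := by rw [hujdef, EuclideanSpace.norm_single]; norm_num
    rw [s11_second_deriv_formula Vl g hVl hg c b uj x]
    by_cases hfar : 4 < ‖b • x‖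
    · rw [hg4 _ (le_of_lt hfar), s11_fderiv_zero_far g hg4 hfar, s11_fderiv2_zero_far g hg4 uj hfar]
      simp only [ContinuousLinearMap.zero_apply, mul_zero, zero_mul, add_zero, mul_zero]
      simp only [abs_zero]
      positivity
    · push_neg at hfar
      -- geometry
      have hxnorm : ‖x‖ ≤ 4 * ((1 - δ) / (16 * Real.sqrt 2)) * r * Real.sqrt (1 + s ^ 2) := by
        have hbx : ‖b • x‖ = b * ‖x‖ := by
          rw [norm_smul, Real.norm_eq_abs, abs_of_pos hb0]
        have hX : (0:ℝ) < lam * r * Real.sqrt (1 + s ^ 2) := by positivity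
        have h1 : ‖x‖ ≤ (lam * r * Real.sqrt (1 + s ^ 2)) * 4 := by
          have h2 : (lam * r * Real.sqrt (1 + s ^ 2)) * (b * ‖x‖) ≤
              (lam * r * Real.sqrt (1 + s ^ 2)) * 4 :=
            mul_le_mul_of_nonneg_left (hbx ▸ hfar) hX.le
          have h3 : (lam * r * Real.sqrt (1 + s ^ 2)) * (b * ‖x‖) = ‖x‖ := by
            rw [hbdef]; field_simp
          linarith
        have h4 : (lam * r * Real.sqrt (1 + s ^ 2)) * 4
            = 4 * ((1 - δ) / (16 * Real.sqrt 2)) * r * Real.sqrt (1 + s ^ 2) := by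
          rw [hlam]; ring
        linarith
      obtain ⟨hge1, hge2⟩ := s11_geom vhat e1 hvhat he1n δ hδ hδ1 r s hr hs x hxnorm
      rw [← hcdef] at hge1 hge2
      set N : ℝ := Real.sqrt (1 + ‖x + c‖ ^ 2) with hNdef
      have hxcN : ‖x + c‖ ≤ N := by
        rw [hNdef, show ‖x + c‖ = Real.sqrt (‖x + c‖ ^ 2) from (Real.sqrt_sq (norm_nonneg _)).symm]
        exact Real.sqrt_le_sqrt (by nlinarith [Real.sq_sqrt (by positivity : (0:ℝ) ≤ ‖x + c‖ ^ 2)])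
      have hN1 : c1 * (r * s) ≤ N := by
        rw [hc1def] at *; linarith
      have hN2 : c1 * (s ^ 2) ≤ N := by
        rw [hc1def] at *; linarith
      have hrs0 : (0:ℝ) < r * s := by positivity
      have hss0 : (0:ℝ) < (s:ℝ) ^ 2 := by positivity
      -- interpolation bounds
      have hNb1 : N ^ (-(γD + 1)) ≤ c1 ^ (-(γD + 1)) * P ^ (-(γD + 1)) := by
        have := s11_interp hc1 hrs0 hss0 hN1 hN2 hν0 hν1 (by linarith : (0:ℝ) ≤ γD + 1)
        rwa [hPeq] at this
      have hNb2 : N ^ (-(γD + 1/2)) ≤ c1 ^ (-(γD + 1/2)) * P ^ (-(γD + 1/2)) := by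
        have := s11_interp hc1 hrs0 hss0 hN1 hN2 hν0 hν1 (by linarith : (0:ℝ) ≤ γD + 1/2)
        rwa [hPeq] at this
      have hNb3 : N ^ (-γD) ≤ c1 ^ (-γD) * P ^ (-γD) := by
        have := s11_interp hc1 hrs0 hss0 hN1 hN2 hν0 hν1 (by linarith : (0:ℝ) ≤ γD)
        rw [hPeq] at this
        rw [show -γD = -(γD) from rfl]
        exact this
      rw [show -(γD + 1) = -γD - 1 by ring] at hNb1
      rw [show -(γD + 1/2) = -γD - 1/2 by ring] at hNb2
      -- individual factors
      have ha2 : |fderiv ℝ (fun z => fderiv ℝ Vl z uj) (x + c) uj| ≤ C2 * N ^ (-γD - 1) := by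
        rw [hNdef]; exact hVd2 (x + c) j j
      have ha1 : |fderiv ℝ Vl (x + c) uj| ≤ C1 * N ^ (-γD - 1/2) := by
        rw [hNdef]
        have := hVd1 (x + c) j
        simpa using this
      have hv0 : |Vl (x + c)| ≤ C0 * N ^ (-γD) := by rw [hNdef]; exact hVb (x + c)
      have hgx : |g (b • x)| ≤ 1 := abs_le.mpr ⟨by linarith [hg0 (b • x)], hg1 (b • x)⟩
      have hb1 : |fderiv ℝ g (b • x) uj| ≤ M1 := by
        have h := (fderiv ℝ g (b • x)).le_opNorm uj
        rw [hujn, mul_one] at h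
        calc |fderiv ℝ g (b • x) uj| = ‖fderiv ℝ g (b • x) uj‖ := (Real.norm_eq_abs _).symm
          _ ≤ ‖fderiv ℝ g (b • x)‖ := h
          _ ≤ M1 := hM1 _
      have hb2 : |fderiv ℝ (fun z => fderiv ℝ g z uj) (b • x) uj| ≤ M2 := by
        rw [s11_fderiv_clm_apply_eq g hg uj (b • x)]
        have h1 : ‖(fderiv ℝ (fderiv ℝ g) (b • x) uj) uj‖
            ≤ ‖fderiv ℝ (fderiv ℝ g) (b • x) uj‖ := by
          have := (fderiv ℝ (fderiv ℝ g) (b • x) uj).le_opNorm uj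
          rwa [hujn, mul_one] at this
        have h2 : ‖fderiv ℝ (fderiv ℝ g) (b • x) uj‖ ≤ ‖fderiv ℝ (fderiv ℝ g) (b • x)‖ := by
          have := (fderiv ℝ (fderiv ℝ g) (b • x)).le_opNorm uj
          rwa [hujn, mul_one] at this
        calc |((ContinuousLinearMap.apply ℝ ℝ uj).comp (fderiv ℝ (fderiv ℝ g) (b • x))) uj|
            = ‖(fderiv ℝ (fderiv ℝ g) (b • x) uj) uj‖ := by
              simp [ContinuousLinearMap.comp_apply, ContinuousLinearMap.apply_apply,
                Real.norm_eq_abs]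
          _ ≤ ‖fderiv ℝ (fderiv ℝ g) (b • x)‖ := le_trans h1 h2
          _ ≤ M2 := hM2 _
      -- term bounds
      have hNpos : (0:ℝ) < N := lt_of_lt_of_le (by positivity) hN1
      have e2half : P ^ (-γD - 1/2) * P ^ (-(1/2):ℝ) = P ^ (-γD - 1) := by
        rw [← Real.rpow_add hP0]; ring_nf
      have e3half : P ^ (-γD) * (P ^ (-(1/2):ℝ) * P ^ (-(1/2):ℝ)) = P ^ (-γD - 1) := by
        rw [← Real.rpow_add hP0, ← Real.rpow_add hP0]; ring_nf
      have hT1 : |fderiv ℝ (fun z => fderiv ℝ Vl z uj) (x + c) uj * g (b • x)|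
          ≤ C2 * c1 ^ (-γD - 1) * P ^ (-γD - 1) := by
        rw [abs_mul]
        calc |fderiv ℝ (fun z => fderiv ℝ Vl z uj) (x + c) uj| * |g (b • x)|
            ≤ (C2 * N ^ (-γD - 1)) * 1 := mul_le_mul ha2 hgx (abs_nonneg _) (by positivity)
          _ = C2 * N ^ (-γD - 1) := mul_one _
          _ ≤ C2 * (c1 ^ (-γD - 1) * P ^ (-γD - 1)) :=
              mul_le_mul_of_nonneg_left hNb1 hC2.le
          _ = C2 * c1 ^ (-γD - 1) * P ^ (-γD - 1) := by ring
      have hT2 : |fderiv ℝ Vl (x + c) uj * (b * fderiv ℝ g (b • x) uj)|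
          ≤ C1 * M1 * lam⁻¹ * c1 ^ (-γD - 1/2) * P ^ (-γD - 1) := by
        rw [abs_mul, abs_mul]
        have hbb : |b| = b := abs_of_pos hb0
        rw [hbb]
        calc |fderiv ℝ Vl (x + c) uj| * (b * |fderiv ℝ g (b • x) uj|)
            ≤ (C1 * N ^ (-γD - 1/2)) * ((lam⁻¹ * P ^ (-(1/2):ℝ)) * M1) := by
              apply mul_le_mul ha1 _ (by positivity) (by positivity)
              exact mul_le_mul hbP hb1 (abs_nonneg _) (by positivity)
          _ ≤ (C1 * (c1 ^ (-γD - 1/2) * P ^ (-γD - 1/2))) * ((lam⁻¹ * P ^ (-(1/2):ℝ)) * M1) := by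
              apply mul_le_mul_of_nonneg_right _ (by positivity)
              exact mul_le_mul_of_nonneg_left hNb2 hC1.le
          _ = C1 * M1 * lam⁻¹ * c1 ^ (-γD - 1/2) * (P ^ (-γD - 1/2) * P ^ (-(1/2):ℝ)) := by ring
          _ = C1 * M1 * lam⁻¹ * c1 ^ (-γD - 1/2) * P ^ (-γD - 1) := by rw [e2half]
      have hT3 : |Vl (x + c) * (b * (b * fderiv ℝ (fun z => fderiv ℝ g z uj) (b • x) uj))|
          ≤ C0 * M2 * lam⁻¹ * lam⁻¹ * c1 ^ (-γD) * P ^ (-γD - 1) := by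
        rw [abs_mul, abs_mul, abs_mul]
        have hbb : |b| = b := abs_of_pos hb0
        rw [hbb]
        calc |Vl (x + c)| * (b * (b * |fderiv ℝ (fun z => fderiv ℝ g z uj) (b • x) uj|))
            ≤ (C0 * N ^ (-γD)) * ((lam⁻¹ * P ^ (-(1/2):ℝ)) * ((lam⁻¹ * P ^ (-(1/2):ℝ)) * M2)) := by
              apply mul_le_mul hv0 _ (by positivity) (by positivity)
              apply mul_le_mul hbP _ (by positivity) (by positivity)
              exact mul_le_mul hbP hb2 (abs_nonneg _) (by positivity)
          _ ≤ (C0 * (c1 ^ (-γD) * P ^ (-γD))) * ((lam⁻¹ * P ^ (-(1/2):ℝ)) * ((lam⁻¹ * P ^ (-(1/2):ℝ)) * M2)) := by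
              apply mul_le_mul_of_nonneg_right _ (by positivity)
              exact mul_le_mul_of_nonneg_left hNb3 hC0.le
          _ = C0 * M2 * lam⁻¹ * lam⁻¹ * c1 ^ (-γD) * (P ^ (-γD) * (P ^ (-(1/2):ℝ) * P ^ (-(1/2):ℝ))) := by ring
          _ = C0 * M2 * lam⁻¹ * lam⁻¹ * c1 ^ (-γD) * P ^ (-γD - 1) := by rw [e3half]
      have habs : |fderiv ℝ (fun z => fderiv ℝ Vl z uj) (x + c) uj * g (b • x)
            + fderiv ℝ Vl (x + c) uj * (b * fderiv ℝ g (b • x) uj)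
            + (fderiv ℝ Vl (x + c) uj * (b * fderiv ℝ g (b • x) uj)
              + Vl (x + c) * (b * (b * fderiv ℝ (fun z => fderiv ℝ g z uj) (b • x) uj)))|
          ≤ |fderiv ℝ (fun z => fderiv ℝ Vl z uj) (x + c) uj * g (b • x)|
            + |fderiv ℝ Vl (x + c) uj * (b * fderiv ℝ g (b • x) uj)|
            + (|fderiv ℝ Vl (x + c) uj * (b * fderiv ℝ g (b • x) uj)|
              + |Vl (x + c) * (b * (b * fderiv ℝ (fun z => fderiv ℝ g z uj) (b • x) uj))|) := by
        calc _ ≤ |fderiv ℝ (fun z => fderiv ℝ Vl z uj) (x + c) uj * g (b • x)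
            + fderiv ℝ Vl (x + c) uj * (b * fderiv ℝ g (b • x) uj)|
            + |fderiv ℝ Vl (x + c) uj * (b * fderiv ℝ g (b • x) uj)
              + Vl (x + c) * (b * (b * fderiv ℝ (fun z => fderiv ℝ g z uj) (b • x) uj))| :=
              abs_add_le _ _
          _ ≤ _ := add_le_add (abs_add_le _ _) (abs_add_le _ _)
      have hK0eq : K0 * P ^ (-γD - 1)
          = C2 * c1 ^ (-γD - 1) * P ^ (-γD - 1)
            + C1 * M1 * lam⁻¹ * c1 ^ (-γD - 1/2) * P ^ (-γD - 1)
            + (C1 * M1 * lam⁻¹ * c1 ^ (-γD - 1/2) * P ^ (-γD - 1)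
              + C0 * M2 * lam⁻¹ * lam⁻¹ * c1 ^ (-γD) * P ^ (-γD - 1)) := by
        rw [hK0def]; ring
      rw [hK0eq]
      linarith
  calc |∑ j, fderiv ℝ (fun y => fderiv ℝ (fun z => Vl (z + c) * g (b • z)) y
        (EuclideanSpace.single j 1)) x (EuclideanSpace.single j 1)|
      ≤ ∑ j, |fderiv ℝ (fun y => fderiv ℝ (fun z => Vl (z + c) * g (b • z)) y
        (EuclideanSpace.single j 1)) x (EuclideanSpace.single j 1)| :=
        Finset.abs_sum_le_sum_abs _ _
    _ ≤ ∑ _j : Fin n, K0 * P ^ (-γD - 1) := Finset.sum_le_sum (fun j _ => hentry j)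
    _ = n * (K0 * P ^ (-γD - 1)) := by
        rw [Finset.sum_const, Finset.card_univ, Fintype.card_fin, nsmul_eq_mul]

lemma s11_fderiv2_zero_far' (g : EuclideanSpace ℝ (Fin n) → ℝ)
    (hg4 : ∀ y, 4 ≤ ‖y‖ → g y = 0)
    {y : EuclideanSpace ℝ (Fin n)} (hy : 4 < ‖y‖) :
    fderiv ℝ (fderiv ℝ g) y = 0 := by
  have hopen : IsOpen {z : EuclideanSpace ℝ (Fin n) | 4 < ‖z‖} :=
    isOpen_lt continuous_const continuous_norm
  have hev : (fderiv ℝ g) =ᶠ[nhds y]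
      (fun _ => (0 : EuclideanSpace ℝ (Fin n) →L[ℝ] ℝ)) :=
    Filter.eventuallyEq_of_mem (hopen.mem_nhds hy)
      (fun z hz => s11_fderiv_zero_far g hg4 hz)
  rw [hev.fderiv_eq, fderiv_fun_const]
  rfl


end S11Aux

set_option maxHeartbeats 2000000 in
theorem stmt_11 (n : ℕ) (hn : 2 ≤ n)
    (e1 : EuclideanSpace ℝ (Fin n))
    (he1 : e1 = EuclideanSpace.single ⟨0, by omega⟩ (1 : ℝ))
    (vhat : EuclideanSpace ℝ (Fin n)) (hvhat : ‖vhat‖ = 1)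
    (δ : ℝ) (hδ : δ = |⟪vhat, e1⟫_ℝ|) (hδ1 : δ < 1)
    (lam : ℝ) (hlam : lam = (1 - δ) / (16 * Real.sqrt 2))
    (g : EuclideanSpace ℝ (Fin n) → ℝ) (hg : ContDiff ℝ (⊤ : ℕ∞) g)
    (hg0 : ∀ y, 0 ≤ g y) (hg1 : ∀ y, g y ≤ 1)
    (hg3 : ∀ y, ‖y‖ ≤ 3 → g y = 1) (hg4 : ∀ y, 4 ≤ ‖y‖ → g y = 0)
    (Vl : EuclideanSpace ℝ (Fin n) → ℝ) (hVl : ContDiff ℝ 2 Vl)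
    (C0 C1 C2 γD : ℝ) (hC0 : 0 < C0) (hC1 : 0 < C1) (hC2 : 0 < C2)
    (hγD : 1 / 4 < γD) (hγD' : γD < 1 / 2)
    (hVb : ∀ x, |Vl x| ≤ C0 * Real.sqrt (1 + ‖x‖ ^ 2) ^ (-γD))
    (hVd1 : ∀ x, ∀ j : Fin n,
      |fderiv ℝ Vl x (EuclideanSpace.single j 1)| ≤
        C1 * Real.sqrt (1 + ‖x‖ ^ 2) ^ (-γD - 1 / 2))
    (hVd2 : ∀ x, ∀ j k : Fin n,
      |fderiv ℝ (fun y => fderiv ℝ Vl y (EuclideanSpace.single k 1)) x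
          (EuclideanSpace.single j 1)| ≤
        C2 * Real.sqrt (1 + ‖x‖ ^ 2) ^ (-γD - 1)) :
    ∃ C > (0 : ℝ), ∀ r : ℝ, 1 ≤ r → ∀ t : ℝ, 1 ≤ |t| →
      ∀ ν ∈ Set.Icc (0 : ℝ) 1,
        ∫ s in (1 : ℝ)..|t|, s ^ 2 * lapSup (cutV Vl g lam vhat e1 r s) ≤
          C * r ^ (-((γD + 1) * ν)) * |t| ^ (3 - (γD + 1) * (2 - ν)) := by
  have he1n : ‖e1‖ = 1 := by rw [he1, EuclideanSpace.norm_single]; norm_num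
  have hγD0 : (0:ℝ) < γD := by linarith
  have hδ0 : 0 ≤ δ := hδ ▸ abs_nonneg _
  have hd0 : (0:ℝ) < 1 - δ := by linarith
  have hlam0 : 0 < lam := by rw [hlam]; positivity
  obtain ⟨M1, hM1n, hM1⟩ := s11_exists_bound (fderiv ℝ g)
    (hg.fderiv_right (m := (⊤ : ℕ∞)) (by simp)).continuous (fun y hy => s11_fderiv_zero_far g hg4 hy)
  obtain ⟨M2, hM2n, hM2⟩ := s11_exists_bound (fderiv ℝ (fderiv ℝ g))
    ((hg.fderiv_right (m := (⊤ : ℕ∞)) (by simp)).fderiv_right (m := (⊤ : ℕ∞)) (by simp)).continuous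
    (fun y hy => s11_fderiv2_zero_far' g hg4 hy)
  set c1 : ℝ := 3 * Real.sqrt (1 - δ) / 8 with hc1def
  have hc1 : 0 < c1 := by rw [hc1def]; positivity
  set Kin : ℝ := n * (C2 * c1 ^ (-γD - 1)
      + 2 * (C1 * M1 * lam⁻¹ * c1 ^ (-γD - 1 / 2))
      + C0 * M2 * lam⁻¹ * lam⁻¹ * c1 ^ (-γD)) with hKindef
  have hKin : 0 < Kin := by
    have hn0 : (0:ℝ) < (n:ℝ) := by
      have : (0:ℕ) < n := by omega
      exact_mod_cast this
    have h1 : 0 < C2 * c1 ^ (-γD - 1) := by positivity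
    have h2 : 0 ≤ 2 * (C1 * M1 * lam⁻¹ * c1 ^ (-γD - 1 / 2)) := by positivity
    have h3 : 0 ≤ C0 * M2 * lam⁻¹ * lam⁻¹ * c1 ^ (-γD) := by positivity
    rw [hKindef]
    apply mul_pos hn0
    linarith
  have h2γ : (0:ℝ) < 1 - 2 * γD := by linarith
  refine ⟨Kin / (1 - 2 * γD), by positivity, ?_⟩
  intro r hr t ht ν hν
  obtain ⟨hν0, hν1⟩ := hν
  set T : ℝ := |t| with hTdef
  have hr0 : (0:ℝ) < r := lt_of_lt_of_le one_pos hr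
  have hT0 : (0:ℝ) < T := lt_of_lt_of_le one_pos ht
  set rA : ℝ := r ^ (ν * (-γD - 1)) with hrAdef
  have hrA0 : 0 < rA := by rw [hrAdef]; positivity
  have hrAeq : rA = r ^ (-((γD + 1) * ν)) := by
    rw [hrAdef, show ν * (-γD - 1) = -((γD + 1) * ν) by ring]
  set e : ℝ := 3 - (γD + 1) * (2 - ν) with hedef
  have hee : 1 - 2 * γD ≤ e := by rw [hedef]; nlinarith
  have he0 : 0 < e := lt_of_lt_of_le h2γ hee
  have hRHS0 : 0 ≤ Kin / (1 - 2 * γD) * r ^ (-((γD + 1) * ν)) * T ^ (3 - (γD + 1) * (2 - ν)) := by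
    positivity
  -- the bounding function
  set q : ℝ := (2 - ν) * (-γD - 1) with hqdef
  set φ : ℝ → ℝ := fun s => s ^ 2 * (Kin * (rA * s ^ q)) with hφdef
  by_cases hInt : IntervalIntegrable
      (fun s => s ^ 2 * lapSup (cutV Vl g lam vhat e1 r s)) volume 1 T
  · have hφcont : ContinuousOn φ (Set.uIcc 1 T) := by
      have hpos : ∀ x ∈ Set.uIcc (1:ℝ) T, x ≠ 0 ∨ (0:ℝ) ≤ q := by
        intro x hx
        left
        rw [Set.uIcc_of_le ht] at hx
        exact ne_of_gt (lt_of_lt_of_le one_pos hx.1)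
      have h1 : ContinuousOn (fun x : ℝ => x ^ q) (Set.uIcc 1 T) :=
        ContinuousOn.rpow_const continuousOn_id hpos
      exact ((continuous_pow 2).continuousOn).mul
        (continuousOn_const.mul (continuousOn_const.mul h1))
    have hφint : IntervalIntegrable φ volume 1 T := hφcont.intervalIntegrable
    have hle : ∀ s ∈ Set.Icc (1:ℝ) T,
        s ^ 2 * lapSup (cutV Vl g lam vhat e1 r s) ≤ φ s := by
      intro s hs
      have hmb := s11_main_bound vhat e1 hvhat he1n δ hδ hδ1 lam hlam g hg hg0 hg1 hg4
        Vl hVl C0 C1 C2 γD hC0 hC1 hC2 hγD0 hVb hVd1 hVd2 M1 M2 hM1n hM2n hM1 hM2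
        r s ν hr hs.1 hν0 hν1
      rw [hφdef]
      have hs2 : (0:ℝ) ≤ s ^ 2 := sq_nonneg s
      calc s ^ 2 * lapSup (cutV Vl g lam vhat e1 r s)
          ≤ s ^ 2 * ((n * (C2 * c1 ^ (-γD - 1)
              + 2 * (C1 * M1 * lam⁻¹ * c1 ^ (-γD - 1 / 2))
              + C0 * M2 * lam⁻¹ * lam⁻¹ * c1 ^ (-γD)))
             * (r ^ (ν * (-γD - 1)) * s ^ ((2 - ν) * (-γD - 1)))) :=
            mul_le_mul_of_nonneg_left hmb hs2
        _ = s ^ 2 * (Kin * (rA * s ^ q)) := by rw [hKindef, hrAdef, hqdef]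
    have hmono := intervalIntegral.integral_mono_on ht hInt hφint hle
    -- compute ∫ φ
    have hφeq : ∀ s ∈ Set.uIcc (1:ℝ) T, φ s = (Kin * rA) * s ^ ((2:ℝ) + q) := by
      intro s hs
      rw [Set.uIcc_of_le ht] at hs
      have hs0 : (0:ℝ) < s := lt_of_lt_of_le one_pos hs.1
      rw [hφdef]
      show s ^ 2 * (Kin * (rA * s ^ q)) = Kin * rA * s ^ ((2:ℝ) + q)
      rw [Real.rpow_add hs0, Real.rpow_two]
      ring_nf
    have hintφ : ∫ s in (1:ℝ)..T, φ s = (Kin * rA) * ((T ^ ((2:ℝ) + q + 1) - 1) / ((2:ℝ) + q + 1)) := by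
      rw [intervalIntegral.integral_congr hφeq, intervalIntegral.integral_const_mul]
      have hq1 : (-1:ℝ) < (2:ℝ) + q := by
        rw [hqdef]; nlinarith
      rw [integral_rpow (Or.inl hq1), Real.one_rpow]
    have heq2 : (2:ℝ) + q + 1 = e := by rw [hqdef, hedef]; ring
    rw [hintφ, heq2] at hmono
    have hTe : (0:ℝ) ≤ T ^ e := Real.rpow_nonneg hT0.le e
    have hd : (T ^ e - 1) / e ≤ T ^ e / (1 - 2 * γD) :=
      div_le_div₀ hTe (by linarith) h2γ hee
    have hfinal : Kin * rA * ((T ^ e - 1) / e) ≤ Kin / (1 - 2 * γD) * rA * T ^ e := by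
      calc Kin * rA * ((T ^ e - 1) / e) ≤ Kin * rA * (T ^ e / (1 - 2 * γD)) :=
            mul_le_mul_of_nonneg_left hd (by positivity)
        _ = Kin / (1 - 2 * γD) * rA * T ^ e := by ring
    rw [← hrAeq]
    linarith
  · rw [intervalIntegral.integral_undef hInt]
    rw [← hrAeq] at hRHS0 ⊢
    exact hRHS0
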